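/- Let ℏ, m > 0 be real, b_c = -Complex.I * ℏ/(2*m), let s, f : ℝ → ℂ be smooth, u = deriv s, define the G-dynamics of type I by (ŵ f)(x) = b_c * (2 * u x * deriv f x + deriv u x * f x), and [s, ŵ] f := s • (ŵ f) - ŵ (s • f). Then for every x ∈ ℝ: (i) ([s, ŵ] f)(x) = -2 * b_c * (u x)^2 * f(x); (ii) exp(-s(x)) * (ŵ (fun t => exp(s(t)) * f(t)))(x) = (ŵ f)(x) + 2 * b_c * (u x)^2 * f(x). -/

import Mathlib

/-- The G-dynamics of type I: `(ŵ f)(x) = b_c (2 u(x) f'(x) + u_x(x) f(x))` with `u = deriv s`. -/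
noncomputable def gDynI (bc : ℂ) (s : ℝ → ℂ) (f : ℝ → ℂ) : ℝ → ℂ := fun x =>
  bc * (2 * deriv s x * deriv f x + deriv (deriv s) x * f x)

/-- The quantum Poisson bracket of multiplication by `s` with an operator `Â`:
`[s, Â] f = s • (Â f) - Â (s • f)`. -/
noncomputable def qpb (s : ℝ → ℂ) (A : (ℝ → ℂ) → (ℝ → ℂ)) (f : ℝ → ℂ) : ℝ → ℂ := fun x =>
  s x * A f x - A (fun t => s t * f t) x

/-- The G-dynamics of type II: with `b_c = -iℏ/(2m)` and `u = deriv s`,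
`[s, ŵ] f = -2 b_c u² f` and `e^{-s} ŵ (e^{s} f) = ŵ f + 2 b_c u² f`. -/
theorem g_dynamics_type_II (ℏ m : ℝ) (hℏ : 0 < ℏ) (hm : 0 < m) (bc : ℂ)
    (hbc : bc = -Complex.I * (ℏ : ℂ) / (2 * (m : ℂ))) (s f : ℝ → ℂ)
    (hs : ContDiff ℝ (⊤ : ℕ∞) s) (hf : ContDiff ℝ (⊤ : ℕ∞) f) (u : ℝ → ℂ) (hu : u = deriv s) (x : ℝ) :
    qpb s (gDynI bc s) f x = -2 * bc * (u x) ^ 2 * f x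
      ∧ Complex.exp (-s x) * gDynI bc s (fun t => Complex.exp (s t) * f t) x
        = gDynI bc s f x + 2 * bc * (u x) ^ 2 * f x := by
  have hds : Differentiable ℝ s := hs.differentiable (by simp)
  have hdf : Differentiable ℝ f := hf.differentiable (by simp)
  have hsf : deriv (fun t => s t * f t) x = deriv s x * f x + s x * deriv f x :=
    ((hds x).hasDerivAt.mul (hdf x).hasDerivAt).deriv
  have hef : deriv (fun t => Complex.exp (s t) * f t) x
      = (Complex.exp (s x) * deriv s x) * f x + Complex.exp (s x) * deriv f x :=
    (((hds x).hasDerivAt.cexp).mul (hdf x).hasDerivAt).deriv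
  constructor
  · simp only [qpb, gDynI, hsf, hu]
    ring
  · simp only [gDynI, hef, hu, Complex.exp_neg]
    field_simp [Complex.exp_ne_zero]
    ring
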